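/- For every m ≥ 2, the topological dimension of Q_m satisfies D(m) − D(m−1) − 1 ≤ dim Q_m ≤ D(m) − 1, where D(m) = 2k(2k−1)^{m−1} is the number of freely reduced words of length m. -/

import Mathlib

open Finset
noncomputable section
attribute [local instance] Classical.propDecidable

abbrev Letter (k : ℕ) := Fin k × Bool

def linv {k : ℕ} (x : Letter k) : Letter k := (x.1, !x.2)

/-- `w` is a freely reduced word: no letter is followed by its inverse. -/
def Reduced {k : ℕ} (w : List (Letter k)) : Prop :=
  ∀ i < w.length, w[i + 1]? ≠ (w[i]?).map linv

/-- `w` is cyclically reduced. -/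
def CyclRed {k : ℕ} (w : List (Letter k)) : Prop := Reduced (w ++ w)

/-- `w` and `w'` define the same cyclic word. -/
def CyclEq {k : ℕ} (w w' : List (Letter k)) : Prop := ∃ n, w' = w.rotate n

/-- the word `u` occurs in the cyclic word of `w` starting at position `i` (with wrap-around). -/
def occursAt {k : ℕ} (w u : List (Letter k)) (i : ℕ) : Prop :=
  ∀ j < u.length, w[(i + j) % w.length]? = u[j]?

/-- the number `n_w(u)` of cyclic occurrences of `u` in the cyclic word `w`. -/
def cyclCount {k : ℕ} (w u : List (Letter k)) : ℕ :=
  ((Finset.range w.length).filter (occursAt w u)).card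

/-- the frequency `f_w(u) = n_w(u)/‖w‖`. -/
def freq {k : ℕ} (w u : List (Letter k)) : ℚ := (cyclCount w u : ℚ) / (w.length : ℚ)

/-- the finite set of freely reduced words of length `m`. -/
def WordsM (k m : ℕ) : Finset (List (Letter k)) :=
  ((Finset.univ : Finset (Fin m → Letter k)).image fun f => List.ofFn f).filter
    (fun w => Reduced w)

/-- the polyhedron `Q_m`, realized as functions supported on reduced words of length `m`. -/
def Qset (k m : ℕ) : Set (List (Letter k) → ℝ) :=
  {q | (∀ v, ¬(Reduced v ∧ v.length = m) → q v = 0) ∧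
       (∀ v, 0 ≤ q v) ∧
       (∑ v ∈ WordsM k m, q v = 1) ∧
       ∀ u : List (Letter k), Reduced u → u.length = m - 1 →
         (∑ x ∈ Finset.univ.filter (fun x : Letter k => Reduced (u ++ [x])), q (u ++ [x])) =
         (∑ x ∈ Finset.univ.filter (fun x : Letter k => Reduced (x :: u)), q (x :: u)) }

/-- `D(m) = 2k(2k-1)^{m-1}`, the number of freely reduced words of length `m`. -/
def DD (k m : ℕ) : ℕ := 2 * k * (2 * k - 1) ^ (m - 1)

/-!
Embed `ℝ^{W_m}`, functions on the reduced words of length `m`, into the ambient space by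
extension by zero. Every point of `Q_m` has total mass one, so the direction of its affine span
lies in the image of the kernel of the mass functional, of dimension `D(m) - 1`. Conversely the
uniform distribution `1 / D(m)` lies in `Q_m`, because every reduced word of length `m - 1` has
exactly `2k - 1` reduced one-letter extensions on either side. Its coordinates are positive, so
it can be moved a little in any direction preserving the mass and the `D(m - 1)` flow equations,
and these directions form a subspace of dimension at least `D(m) - D(m - 1) - 1`.
-/

open Module

section VectorSpan

variable {𝕜 V E F : Type*} [Field 𝕜] [AddCommGroup V] [Module 𝕜 V] [AddCommGroup E]
  [Module 𝕜 E] [AddCommGroup F] [Module 𝕜 F]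

lemma vectorSpan_le_map_ker {s : Set E} (ι : V →ₗ[𝕜] E) (φ : V →ₗ[𝕜] F) (c : F)
    (hs : s ⊆ ι '' (φ ⁻¹' {c})) : vectorSpan 𝕜 s ≤ (LinearMap.ker φ).map ι := by
  rw [vectorSpan_def, Submodule.span_le]
  rintro _ ⟨a, ha, b, hb, rfl⟩
  obtain ⟨a, ha, rfl⟩ := hs ha
  obtain ⟨b, hb, rfl⟩ := hs hb
  refine ⟨a - b, ?_, map_sub ι a b⟩
  simp_all

lemma le_vectorSpan_of_forall_exists_add_smul_mem {s : Set E} {p : E} (hp : p ∈ s)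
    {K : Submodule 𝕜 E} (hK : ∀ v ∈ K, ∃ t ≠ (0 : 𝕜), p + t • v ∈ s) :
    K ≤ vectorSpan 𝕜 s := by
  intro v hv
  obtain ⟨t, ht, hpt⟩ := hK v hv
  rw [show v = t⁻¹ • ((p + t • v) -ᵥ p) by simp [smul_smul, ht]]
  exact Submodule.smul_mem _ _ (vsub_mem_vectorSpan 𝕜 hpt hp)

end VectorSpan

lemma finrank_sub_finrank_le_finrank_ker {K V W : Type*} [DivisionRing K] [AddCommGroup V]
    [Module K V] [AddCommGroup W] [Module K W] [FiniteDimensional K V] [FiniteDimensional K W]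
    (f : V →ₗ[K] W) :
    finrank K V - finrank K W ≤ finrank K (LinearMap.ker f) := by
  have := f.finrank_range_add_finrank_ker
  have := (LinearMap.range f).finrank_le
  omega

open Filter Topology in
lemma exists_ne_zero_forall_pos_add_mul {ι : Type*} [Finite ι] {c : ι → ℝ} (hc : ∀ i, 0 < c i)
    (f : ι → ℝ) : ∃ t ≠ 0, ∀ i, 0 < c i + t * f i := by
  have hpos : ∀ᶠ t in 𝓝[≠] (0 : ℝ), ∀ i, 0 < c i + t * f i := by
    refine nhdsWithin_le_nhds (eventually_all.2 fun i => ?_)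
    refine Tendsto.eventually_const_lt (hc i) ?_
    exact Continuous.tendsto' (f := fun t : ℝ => c i + t * f i) (by fun_prop) 0 (c i) (by simp)
  obtain ⟨t, ht, ht0⟩ := (hpos.and self_mem_nhdsWithin).exists
  exact ⟨t, ht0, ht⟩

lemma linv_linv {k : ℕ} (x : Letter k) : linv (linv x) = x := by
  simp [linv]

lemma reduced_iff_isChain {k : ℕ} (w : List (Letter k)) :
    Reduced w ↔ w.IsChain (fun a b => b ≠ linv a) := by
  rw [List.isChain_iff_getElem, Reduced]
  refine ⟨fun h i hi => ?_, fun h i hi => ?_⟩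
  · simpa [List.getElem?_eq_getElem hi, List.getElem?_eq_getElem (Nat.lt_of_succ_lt hi)]
      using h i (by omega)
  · by_cases hi' : i + 1 < w.length
    · simpa [List.getElem?_eq_getElem hi, List.getElem?_eq_getElem hi'] using h i hi'
    · simp [List.getElem?_eq_none (not_lt.mp hi'), List.getElem?_eq_getElem hi]

lemma Reduced.of_append_left {k : ℕ} {u v : List (Letter k)} (h : Reduced (u ++ v)) :
    Reduced u := by
  rw [reduced_iff_isChain] at *
  exact (List.isChain_append.mp h).1

lemma reduced_singleton {k : ℕ} (x : Letter k) : Reduced [x] := by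
  simp [reduced_iff_isChain]

lemma reduced_append_singleton_iff {k : ℕ} {u : List (Letter k)} (hu : u ≠ []) (x : Letter k) :
    Reduced (u ++ [x]) ↔ Reduced u ∧ x ≠ linv (u.getLast hu) := by
  simp [reduced_iff_isChain, List.isChain_append, List.getLast?_eq_some_getLast hu]

lemma reduced_cons_iff {k : ℕ} {u : List (Letter k)} (hu : u ≠ []) (x : Letter k) :
    Reduced (x :: u) ↔ Reduced u ∧ x ≠ linv (u.head hu) := by
  simp only [reduced_iff_isChain, List.isChain_cons, List.head?_eq_some_head hu, Option.mem_def,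
    Option.some.injEq, forall_eq']
  constructor
  · rintro ⟨h₁, h₂⟩
    exact ⟨h₂, fun h => h₁ (by rw [h, linv_linv])⟩
  · rintro ⟨h₂, h₁⟩
    exact ⟨fun h => h₁ (by rw [h, linv_linv]), h₂⟩

lemma card_letter (k : ℕ) : Fintype.card (Letter k) = 2 * k := by
  simp [mul_comm]

lemma card_univ_erase_letter {k : ℕ} (c : Letter k) :
    (Finset.univ.erase c).card = 2 * k - 1 := by
  rw [Finset.card_erase_of_mem (Finset.mem_univ c), Finset.card_univ, card_letter]

lemma card_filter_reduced_append_singleton {k : ℕ} {u : List (Letter k)} (hu : u ≠ [])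
    (hr : Reduced u) :
    (Finset.univ.filter (fun x : Letter k => Reduced (u ++ [x]))).card = 2 * k - 1 := by
  rw [← card_univ_erase_letter (linv (u.getLast hu)), ← Finset.filter_ne']
  simp [reduced_append_singleton_iff hu, hr]

lemma card_filter_reduced_cons {k : ℕ} {u : List (Letter k)} (hu : u ≠ []) (hr : Reduced u) :
    (Finset.univ.filter (fun x : Letter k => Reduced (x :: u))).card = 2 * k - 1 := by
  rw [← card_univ_erase_letter (linv (u.head hu)), ← Finset.filter_ne']
  simp [reduced_cons_iff hu, hr]

lemma mem_wordsM {k m : ℕ} {w : List (Letter k)} :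
    w ∈ WordsM k m ↔ Reduced w ∧ w.length = m := by
  simp only [WordsM, Finset.mem_filter, Finset.mem_image, Finset.mem_univ, true_and]
  refine ⟨fun ⟨⟨f, hf⟩, hr⟩ => ⟨hr, hf ▸ List.length_ofFn⟩, fun ⟨hr, hl⟩ => ⟨?_, hr⟩⟩
  exact ⟨fun i => w[i], List.ext_getElem (by simp [hl]) (by simp)⟩

lemma ne_nil_of_mem_wordsM {k m : ℕ} {w : List (Letter k)} (hw : w ∈ WordsM k m)
    (hm : m ≠ 0) : w ≠ [] := by
  rintro rfl
  exact hm (mem_wordsM.mp hw).2.symm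

lemma wordsM_one (k : ℕ) : WordsM k 1 = Finset.univ.image (fun x : Letter k => [x]) := by
  ext w
  simp only [mem_wordsM, Finset.mem_image, Finset.mem_univ, true_and, List.length_eq_one_iff]
  constructor
  · rintro ⟨-, x, rfl⟩
    exact ⟨x, rfl⟩
  · rintro ⟨x, rfl⟩
    exact ⟨reduced_singleton x, x, rfl⟩

lemma wordsM_succ (k n : ℕ) :
    WordsM k (n + 1) = (WordsM k n).biUnion fun w =>
      (Finset.univ.filter fun x => Reduced (w ++ [x])).image fun x => w ++ [x] := by
  ext w'
  simp only [Finset.mem_biUnion, Finset.mem_image, Finset.mem_filter, Finset.mem_univ, true_and,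
    mem_wordsM]
  constructor
  · rintro ⟨hr, hl⟩
    have hne : w' ≠ [] := List.ne_nil_of_length_eq_add_one hl
    have hsplit := List.dropLast_append_getLast hne
    rw [← hsplit] at hr
    exact ⟨w'.dropLast, ⟨hr.of_append_left, by simp [hl]⟩, w'.getLast hne, hr, hsplit⟩
  · rintro ⟨w, ⟨-, hl⟩, x, hx, rfl⟩
    exact ⟨hx, by simp [hl]⟩

lemma card_wordsM_succ {k n : ℕ} (hn : n ≠ 0) :
    (WordsM k (n + 1)).card = (WordsM k n).card * (2 * k - 1) := by
  rw [wordsM_succ, Finset.card_biUnion, Finset.sum_const_nat]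
  · intro w hw
    rw [Finset.card_image_of_injective _ fun x y h => by simpa using h,
      card_filter_reduced_append_singleton (ne_nil_of_mem_wordsM hw hn) (mem_wordsM.mp hw).1]
  · intro w₁ _ w₂ _ hne
    simp only [Function.onFun, Finset.disjoint_left, Finset.mem_image]
    rintro _ ⟨x, -, rfl⟩ ⟨y, -, he⟩
    exact hne (List.append_inj' he (by simp)).1.symm

lemma card_wordsM {k m : ℕ} (hm : m ≠ 0) : (WordsM k m).card = DD k m := by
  induction m with
  | zero => exact absurd rfl hm
  | succ n ih =>
    rcases eq_or_ne n 0 with rfl | hn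
    · simp [wordsM_one, Finset.card_image_of_injective _ List.singleton_injective, DD, mul_comm]
    · rw [card_wordsM_succ hn, ih hn, DD, DD, mul_assoc, ← pow_succ,
        Nat.sub_add_cancel (by omega), Nat.add_sub_cancel]

lemma finrank_wordsM_fun {k m : ℕ} (hm : m ≠ 0) : finrank ℝ (WordsM k m → ℝ) = DD k m := by
  rw [finrank_fintype_fun_eq_card, Fintype.card_coe, card_wordsM hm]

def extendByZero (k m : ℕ) : (WordsM k m → ℝ) →ₗ[ℝ] (List (Letter k) → ℝ) :=
  Function.ExtendByZero.linearMap ℝ Subtype.val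

lemma extendByZero_apply_of_mem {k m : ℕ} (g : WordsM k m → ℝ) {v : List (Letter k)}
    (hv : v ∈ WordsM k m) : extendByZero k m g v = g ⟨v, hv⟩ :=
  Subtype.val_injective.extend_apply g 0 ⟨v, hv⟩

lemma extendByZero_apply_of_notMem {k m : ℕ} (g : WordsM k m → ℝ) {v : List (Letter k)}
    (hv : v ∉ WordsM k m) : extendByZero k m g v = 0 :=
  Function.extend_apply' _ _ _ fun ⟨w, hw⟩ => hv (hw ▸ w.2)

lemma extendByZero_injective (k m : ℕ) : Function.Injective (extendByZero k m) :=
  Function.extend_injective Subtype.val_injective (0 : List (Letter k) → ℝ)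

def mass (k m : ℕ) : (List (Letter k) → ℝ) →ₗ[ℝ] ℝ :=
  ∑ v ∈ WordsM k m, LinearMap.proj v

def flowDefect (k m : ℕ) : (List (Letter k) → ℝ) →ₗ[ℝ] (WordsM k (m - 1) → ℝ) :=
  LinearMap.pi fun u =>
    ∑ x ∈ Finset.univ.filter (fun x : Letter k => Reduced (u.1 ++ [x])),
        LinearMap.proj (u.1 ++ [x]) -
      ∑ x ∈ Finset.univ.filter (fun x : Letter k => Reduced (x :: u.1)),
        LinearMap.proj (x :: u.1)

lemma mem_Qset_iff {k m : ℕ} {q : List (Letter k) → ℝ} :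
    q ∈ Qset k m ↔ (∀ v ∉ WordsM k m, q v = 0) ∧ (∀ v, 0 ≤ q v) ∧ mass k m q = 1 ∧
      flowDefect k m q = 0 := by
  simp only [Qset, Set.mem_ofPred_eq, mem_wordsM, mass, flowDefect, funext_iff, Subtype.forall,
    LinearMap.pi_apply, LinearMap.sub_apply, LinearMap.sum_apply,
    LinearMap.proj_apply, Pi.zero_apply, sub_eq_zero]
  grind

lemma mass_extendByZero {k m : ℕ} (g : WordsM k m → ℝ) :
    mass k m (extendByZero k m g) = ∑ w, g w := by
  simp only [mass, LinearMap.sum_apply, LinearMap.proj_apply]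
  rw [← Finset.sum_coe_sort]
  exact Finset.sum_congr rfl fun w _ => extendByZero_apply_of_mem g w.2

lemma extendByZero_mem_Qset {k m : ℕ} {g : WordsM k m → ℝ} (hg : ∀ w, 0 ≤ g w)
    (hmass : mass k m (extendByZero k m g) = 1)
    (hflow : flowDefect k m (extendByZero k m g) = 0) : extendByZero k m g ∈ Qset k m := by
  refine mem_Qset_iff.2
    ⟨fun v hv => extendByZero_apply_of_notMem g hv, fun v => ?_, hmass, hflow⟩
  by_cases hv : v ∈ WordsM k m
  · exact (extendByZero_apply_of_mem g hv).symm ▸ hg _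
  · exact (extendByZero_apply_of_notMem g hv).symm ▸ le_rfl

lemma Qset_subset_image_extendByZero (k m : ℕ) :
    Qset k m ⊆ extendByZero k m '' ((mass k m ∘ₗ extendByZero k m) ⁻¹' {1}) := by
  intro q hq
  obtain ⟨hsupp, -, hmass, -⟩ := mem_Qset_iff.1 hq
  have hext : extendByZero k m (fun w => q w) = q := by
    funext v
    by_cases hv : v ∈ WordsM k m
    · exact extendByZero_apply_of_mem _ hv
    · rw [extendByZero_apply_of_notMem _ hv, hsupp v hv]
  exact ⟨fun w => q w, by simpa [hext] using hmass, hext⟩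

lemma flowDefect_extendByZero_const {k m : ℕ} (hm : 2 ≤ m) (c : ℝ) :
    flowDefect k m (extendByZero k m fun _ => c) = 0 := by
  funext ⟨u, hu⟩
  obtain ⟨hr, hl⟩ := mem_wordsM.1 hu
  have hne : u ≠ [] := ne_nil_of_mem_wordsM hu (by omega)
  have hlen : ∀ x : Letter k, (u ++ [x]).length = m ∧ (x :: u).length = m := by
    intro x; simp [hl]; omega
  simp only [flowDefect, LinearMap.pi_apply, LinearMap.sub_apply, LinearMap.sum_apply,
    LinearMap.proj_apply, Pi.zero_apply, sub_eq_zero]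
  rw [Finset.sum_congr rfl fun x hx => extendByZero_apply_of_mem _
      (mem_wordsM.2 ⟨(Finset.mem_filter.1 hx).2, (hlen x).1⟩),
    Finset.sum_congr rfl fun x hx => extendByZero_apply_of_mem _
      (mem_wordsM.2 ⟨(Finset.mem_filter.1 hx).2, (hlen x).2⟩),
    Finset.sum_const, Finset.sum_const, card_filter_reduced_append_singleton hne hr,
    card_filter_reduced_cons hne hr]

lemma DD_pos {k : ℕ} (hk : k ≠ 0) (m : ℕ) : 0 < DD k m :=
  Nat.mul_pos (by omega) (pow_pos (by omega) _)

lemma uniform_mem_Qset {k m : ℕ} (hk : k ≠ 0) (hm : 2 ≤ m) :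
    extendByZero k m (fun _ => (DD k m : ℝ)⁻¹) ∈ Qset k m := by
  have hD : (DD k m : ℝ) ≠ 0 := by exact_mod_cast (DD_pos hk m).ne'
  refine extendByZero_mem_Qset (fun _ => by positivity) ?_ (flowDefect_extendByZero_const hm _)
  rw [mass_extendByZero, Finset.sum_const, Finset.card_univ, Fintype.card_coe,
    card_wordsM (by omega), nsmul_eq_mul, mul_inv_cancel₀ hD]

lemma vectorSpan_Qset_le_map_ker_mass (k m : ℕ) :
    vectorSpan ℝ (Qset k m) ≤
      (LinearMap.ker (mass k m ∘ₗ extendByZero k m)).map (extendByZero k m) :=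
  vectorSpan_le_map_ker _ _ _ (Qset_subset_image_extendByZero k m)

lemma finrank_ker_mass_extendByZero {k m : ℕ} (hk : k ≠ 0) (hm : 2 ≤ m) :
    finrank ℝ (LinearMap.ker (mass k m ∘ₗ extendByZero k m)) = DD k m - 1 := by
  have hmass : mass k m ∘ₗ extendByZero k m ≠ 0 := fun h => one_ne_zero <|
    (mem_Qset_iff.1 (uniform_mem_Qset hk hm)).2.2.1.symm.trans (LinearMap.congr_fun h _)
  have := Dual.finrank_ker_add_one_of_ne_zero hmass
  rw [finrank_wordsM_fun (by omega)] at this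
  omega

lemma map_ker_le_vectorSpan_Qset {k m : ℕ} (hk : k ≠ 0) (hm : 2 ≤ m) :
    (LinearMap.ker ((flowDefect k m).prod (mass k m) ∘ₗ extendByZero k m)).map
      (extendByZero k m) ≤ vectorSpan ℝ (Qset k m) := by
  refine le_vectorSpan_of_forall_exists_add_smul_mem (uniform_mem_Qset hk hm) ?_
  rintro _ ⟨f, hf, rfl⟩
  have hD : (0 : ℝ) < DD k m := by exact_mod_cast DD_pos hk m
  obtain ⟨hflow, hmass⟩ : flowDefect k m (extendByZero k m f) = 0 ∧
      mass k m (extendByZero k m f) = 0 := by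
    simpa only [SetLike.mem_coe, LinearMap.mem_ker, LinearMap.coe_comp, Function.comp_apply,
      LinearMap.prod_apply, Function.prod_apply, Prod.mk_eq_zero] using hf
  obtain ⟨t, ht, hpos⟩ := exists_ne_zero_forall_pos_add_mul (fun _ => inv_pos.2 hD) f
  refine ⟨t, ht, ?_⟩
  rw [← map_smul, ← map_add]
  refine extendByZero_mem_Qset (fun w => by simpa using (hpos w).le) ?_ ?_
  · simp only [map_add, map_smul, hmass, smul_zero, add_zero]
    exact (mem_Qset_iff.1 (uniform_mem_Qset hk hm)).2.2.1
  · simp only [map_add, map_smul, hflow, smul_zero, add_zero]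
    exact flowDefect_extendByZero_const hm _

theorem stmt16 (k m : ℕ) (hk : 2 ≤ k) (hm : 2 ≤ m) :
    DD k m - DD k (m - 1) - 1 ≤ Module.finrank ℝ (affineSpan ℝ (Qset k m)).direction ∧
    Module.finrank ℝ (affineSpan ℝ (Qset k m)).direction ≤ DD k m - 1 := by
  have hk₀ : k ≠ 0 := by omega
  set ι := extendByZero k m
  set Ψ := (flowDefect k m).prod (mass k m) ∘ₗ ι
  have hup := vectorSpan_Qset_le_map_ker_mass k m
  have : FiniteDimensional ℝ (vectorSpan ℝ (Qset k m)) := Submodule.finiteDimensional_of_le hup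
  rw [direction_affineSpan]
  constructor
  · calc DD k m - DD k (m - 1) - 1
        = finrank ℝ (WordsM k m → ℝ) - finrank ℝ ((WordsM k (m - 1) → ℝ) × ℝ) := by
          rw [finrank_prod, finrank_wordsM_fun (by omega), finrank_wordsM_fun (by omega),
            finrank_self, Nat.sub_sub]
      _ ≤ finrank ℝ (LinearMap.ker Ψ) := finrank_sub_finrank_le_finrank_ker Ψ
      _ = finrank ℝ ((LinearMap.ker Ψ).map ι) :=
        (Submodule.equivMapOfInjective ι (extendByZero_injective k m) _).finrank_eq
      _ ≤ _ := Submodule.finrank_mono (map_ker_le_vectorSpan_Qset hk₀ hm)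
  · calc _ ≤ finrank ℝ ((LinearMap.ker (mass k m ∘ₗ ι)).map ι) := Submodule.finrank_mono hup
      _ ≤ finrank ℝ (LinearMap.ker (mass k m ∘ₗ ι)) := Submodule.finrank_map_le _ _
      _ = DD k m - 1 := finrank_ker_mass_extendByZero hk₀ hm
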